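/- arXiv:2105.03515 — 4 statements merged into one kernel-verified Lean document; each statement's English description precedes it below -/
import Mathlib

section
/- In sl(4, R), consider the four elements Z_1 = e_1 - f_1, Z_2 = e_2 - f_2, Z_3 = e_3 + f_3 together with Z_0 = e_0 - f_0 where e_0 = E_{41}, f_0 = E_{14} (and e_i = E_{i,i+1}, f_i = E_{i+1,i} for i = 1,2,3). Then these satisfy: ad(Z_0)^2(Z_1) = -Z_1, ad(Z_0)^2(Z_3) = -Z_3, ad(Z_1)^2(Z_0) = -Z_0, ad(Z_3)^2(Z_0) = Z_0, ad(Z_2)^2(Z_1) = -Z_1, ad(Z_1)^2(Z_2) = -Z_2, ad(Z_3)^2(Z_2) = Z_2, ad(Z_2)^2(Z_3) = -Z_3, and [Z_0,Z_2] = [Z_1,Z_3] = 0; consequently (-ad(Z_0)^2 + ad(Z_1)^2 + ad(Z_2)^2 + ad(Z_3)^2)(Z_mu) = 0 for all mu = 0,1,2,3. -/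
open Matrix

/-!
Each `Zμ` has the shape `a E_ij + b E_ji`. For pairwise distinct `i, j, k`, a direct computation
with `E_ij E_kl = δ_jk E_il` gives `ad(a E_ij + b E_ji)² (c E_jk + d E_kj) = ab (c E_jk + d E_kj)`,
while two such elements on disjoint index pairs commute. The coefficient `ab` is `-1` for the
rotation generators `Z₀, Z₁, Z₂` and `+1` for the boost `Z₃`, which produces all the signs; the
Casimir identity is then a sum of these relations.
-/

namespace Matrix

variable {n R : Type*} [Fintype n] [DecidableEq n] [CommRing R]

lemma lie_single_add_single_eq_zero {i j k l : n} (hik : i ≠ k) (hil : i ≠ l) (hjk : j ≠ k)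
    (hjl : j ≠ l) (a b c d : R) :
    ⁅single i j a + single j i b, single k l c + single l k d⁆ = 0 := by
  simp [Ring.lie_def, mul_add, add_mul, hik, hil, hjk, hjl, hik.symm, hil.symm, hjk.symm,
    hjl.symm]

lemma lie_lie_single_add_single {i j k : n} (hij : i ≠ j) (hjk : j ≠ k) (hik : i ≠ k)
    (a b c d : R) :
    ⁅single i j a + single j i b, ⁅single i j a + single j i b, single j k c + single k j d⁆⁆ =
      (a * b) • (single j k c + single k j d) := by
  simp only [Ring.lie_def, mul_add, add_mul, mul_sub, sub_mul, single_mul_single_same,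
    single_mul_single_of_ne, ne_eq, hij, hjk, hik, hij.symm, hjk.symm, hik.symm,
    not_false_eq_true, add_zero, zero_add, sub_zero, zero_sub, sub_self, sub_neg_eq_add,
    smul_add, smul_single, smul_eq_mul]
  congr 2 <;> ring

end Matrix

lemma lorentzian_casimir_apply_eq_zero {L : Type*} [LieRing L] {Z0 Z1 Z2 Z3 : L}
    (h01 : ⁅Z0, ⁅Z0, Z1⁆⁆ = -Z1) (h03 : ⁅Z0, ⁅Z0, Z3⁆⁆ = -Z3) (h10 : ⁅Z1, ⁅Z1, Z0⁆⁆ = -Z0)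
    (h30 : ⁅Z3, ⁅Z3, Z0⁆⁆ = Z0) (h21 : ⁅Z2, ⁅Z2, Z1⁆⁆ = -Z1) (h12 : ⁅Z1, ⁅Z1, Z2⁆⁆ = -Z2)
    (h32 : ⁅Z3, ⁅Z3, Z2⁆⁆ = Z2) (h23 : ⁅Z2, ⁅Z2, Z3⁆⁆ = -Z3) (h02 : ⁅Z0, Z2⁆ = 0)
    (h13 : ⁅Z1, Z3⁆ = 0) (W : L) (hW : W = Z0 ∨ W = Z1 ∨ W = Z2 ∨ W = Z3) :
    -⁅Z0, ⁅Z0, W⁆⁆ + ⁅Z1, ⁅Z1, W⁆⁆ + ⁅Z2, ⁅Z2, W⁆⁆ + ⁅Z3, ⁅Z3, W⁆⁆ = 0 := by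
  have h20 : ⁅Z2, Z0⁆ = 0 := by rw [← lie_skew, h02, neg_zero]
  have h31 : ⁅Z3, Z1⁆ = 0 := by rw [← lie_skew, h13, neg_zero]
  rcases hW with rfl | rfl | rfl | rfl <;>
    simp only [lie_self, lie_zero, h01, h03, h10, h30, h21, h12, h32, h23, h02, h13, h20, h31] <;>
    abel

/-- Berman generator computations in `sl(4,ℝ)` verifying the relations of the
Lorentzian QMSA `Q_{3,1}(0,0,0,0)`. -/
theorem berman_generators_sl4_lorentzian
    (Z0 Z1 Z2 Z3 : Matrix (Fin 4) (Fin 4) ℝ)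
    (hZ0 : Z0 = single 3 0 1 - single 0 3 1)
    (hZ1 : Z1 = single 0 1 1 - single 1 0 1)
    (hZ2 : Z2 = single 1 2 1 - single 2 1 1)
    (hZ3 : Z3 = single 2 3 1 + single 3 2 1) :
    ⁅Z0, ⁅Z0, Z1⁆⁆ = -Z1 ∧
    ⁅Z0, ⁅Z0, Z3⁆⁆ = -Z3 ∧
    ⁅Z1, ⁅Z1, Z0⁆⁆ = -Z0 ∧
    ⁅Z3, ⁅Z3, Z0⁆⁆ = Z0 ∧
    ⁅Z2, ⁅Z2, Z1⁆⁆ = -Z1 ∧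
    ⁅Z1, ⁅Z1, Z2⁆⁆ = -Z2 ∧
    ⁅Z3, ⁅Z3, Z2⁆⁆ = Z2 ∧
    ⁅Z2, ⁅Z2, Z3⁆⁆ = -Z3 ∧
    ⁅Z0, Z2⁆ = 0 ∧
    ⁅Z1, Z3⁆ = 0 ∧
    (∀ W, W = Z0 ∨ W = Z1 ∨ W = Z2 ∨ W = Z3 →
      -⁅Z0, ⁅Z0, W⁆⁆ + ⁅Z1, ⁅Z1, W⁆⁆ + ⁅Z2, ⁅Z2, W⁆⁆ + ⁅Z3, ⁅Z3, W⁆⁆ = 0) := by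
  have Z0_30 : Z0 = single 3 0 1 + single 0 3 (-1) := by rw [hZ0, sub_eq_add_neg, single_neg]
  have Z1_01 : Z1 = single 0 1 1 + single 1 0 (-1) := by rw [hZ1, sub_eq_add_neg, single_neg]
  have Z2_12 : Z2 = single 1 2 1 + single 2 1 (-1) := by rw [hZ2, sub_eq_add_neg, single_neg]
  have Z0_03 : Z0 = single 0 3 (-1) + single 3 0 1 := Z0_30.trans (add_comm _ _)
  have Z1_10 : Z1 = single 1 0 (-1) + single 0 1 1 := Z1_01.trans (add_comm _ _)
  have Z2_21 : Z2 = single 2 1 (-1) + single 1 2 1 := Z2_12.trans (add_comm _ _)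
  have Z3_32 : Z3 = single 3 2 1 + single 2 3 1 := hZ3.trans (add_comm _ _)
  have r01 : ⁅Z0, ⁅Z0, Z1⁆⁆ = -Z1 := by
    rw [Z0_30, Z1_01, lie_lie_single_add_single (by decide) (by decide) (by decide)]; module
  have r03 : ⁅Z0, ⁅Z0, Z3⁆⁆ = -Z3 := by
    rw [Z0_03, Z3_32, lie_lie_single_add_single (by decide) (by decide) (by decide)]; module
  have r10 : ⁅Z1, ⁅Z1, Z0⁆⁆ = -Z0 := by
    rw [Z1_10, Z0_03, lie_lie_single_add_single (by decide) (by decide) (by decide)]; module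
  have r30 : ⁅Z3, ⁅Z3, Z0⁆⁆ = Z0 := by
    rw [hZ3, Z0_30, lie_lie_single_add_single (by decide) (by decide) (by decide)]; module
  have r21 : ⁅Z2, ⁅Z2, Z1⁆⁆ = -Z1 := by
    rw [Z2_21, Z1_10, lie_lie_single_add_single (by decide) (by decide) (by decide)]; module
  have r12 : ⁅Z1, ⁅Z1, Z2⁆⁆ = -Z2 := by
    rw [Z1_01, Z2_12, lie_lie_single_add_single (by decide) (by decide) (by decide)]; module
  have r32 : ⁅Z3, ⁅Z3, Z2⁆⁆ = Z2 := by
    rw [Z3_32, Z2_21, lie_lie_single_add_single (by decide) (by decide) (by decide)]; module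
  have r23 : ⁅Z2, ⁅Z2, Z3⁆⁆ = -Z3 := by
    rw [Z2_12, hZ3, lie_lie_single_add_single (by decide) (by decide) (by decide)]; module
  have c02 : ⁅Z0, Z2⁆ = 0 := by
    rw [Z0_30, Z2_12, lie_single_add_single_eq_zero (by decide) (by decide) (by decide) (by decide)]
  have c13 : ⁅Z1, Z3⁆ = 0 := by
    rw [Z1_01, hZ3, lie_single_add_single_eq_zero (by decide) (by decide) (by decide) (by decide)]
  -- Matrices carry no global `LieRing` instance; this one has the commutator as its bracket.
  let _ : LieRing (Matrix (Fin 4) (Fin 4) ℝ) := LieRing.ofAssociativeRing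
  exact ⟨r01, r03, r10, r30, r21, r12, r32, r23, c02, c13,
    lorentzian_casimir_apply_eq_zero r01 r03 r10 r30 r21 r12 r32 r23 c02 c13⟩
end

section
/- Let g be a Lie algebra with elements e_i, f_i, h_i and e_j, f_j, h_j satisfying the Chevalley--Serre relations for a simply-laced Cartan matrix entry a_{ij} = a_{ji} = -1: [h_i,e_j] = -e_j, [h_i,f_j] = f_j, [e_i,f_j] = 0 = [e_j,f_i], [e_i,f_i] = h_i, [h_i,e_i] = 2e_i, [h_i,f_i] = -2f_i, ad(e_i)^2(e_j) = 0, ad(f_i)^2(f_j) = 0. Set X_i = e_i - f_i, X_j = e_j - f_j, Y_j = e_j + f_j. Then [X_i,[X_i,X_j]] = -X_j and [X_i,[X_i,Y_j]] = -Y_j. -/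
/-!
With `X = e_i - f_i`, both `e_j` and `f_j` are eigenvectors of `(ad X)²` with eigenvalue `-1`:
`ad f_i` kills `e_j` and `ad e_i` kills `f_j`, the Serre relations kill the square terms, and the
remaining cross term `[f_i, [e_i, e_j]]` (resp. `[e_i, [f_i, f_j]]`) returns `e_j` (resp. `f_j`) by
the Jacobi identity and `[h_i, e_j] = -e_j` (resp. `[h_i, f_j] = f_j`). Linearity finishes.
-/

section LieRing

variable {L : Type*} [LieRing L]

theorem lie_lie_eq_self_of_lie_eq {e f h x : L} (hef : ⁅e, f⁆ = h) (hex : ⁅e, x⁆ = 0)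
    (hhx : ⁅h, x⁆ = x) : ⁅e, ⁅f, x⁆⁆ = x := by
  rw [leibniz_lie, hef, hhx, hex, lie_zero, add_zero]

theorem lie_sub_lie_sub_eq_neg {e f x : L} (hfx : ⁅f, x⁆ = 0) (hex : ⁅e, ⁅e, x⁆⁆ = 0)
    (hfex : ⁅f, ⁅e, x⁆⁆ = x) : ⁅e - f, ⁅e - f, x⁆⁆ = -x := by
  rw [sub_lie e f x, hfx, sub_zero, sub_lie, hex, hfex, zero_sub]

theorem lie_sub_lie_sub_eq_neg_of_lie_left_eq_zero {e f y : L} (hey : ⁅e, y⁆ = 0)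
    (hffy : ⁅f, ⁅f, y⁆⁆ = 0) (hefy : ⁅e, ⁅f, y⁆⁆ = y) : ⁅e - f, ⁅e - f, y⁆⁆ = -y := by
  have h := lie_sub_lie_sub_eq_neg hey hffy hefy
  rwa [← neg_sub e f, neg_lie, neg_lie, lie_neg, neg_neg] at h

end LieRing

theorem berman_relations_white_node_general
    (g : Type*) [LieRing g]
    (ei fi hi ej fj : g)
    (hhiej : ⁅hi, ej⁆ = -ej)
    (hhifj : ⁅hi, fj⁆ = fj)
    (heifj : ⁅ei, fj⁆ = 0)
    (hejfi : ⁅ej, fi⁆ = 0)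
    (heifi : ⁅ei, fi⁆ = hi)
    (hserre_e : ⁅ei, ⁅ei, ej⁆⁆ = 0)
    (hserre_f : ⁅fi, ⁅fi, fj⁆⁆ = 0) :
    ⁅ei - fi, ⁅ei - fi, ej - fj⁆⁆ = -(ej - fj) ∧
    ⁅ei - fi, ⁅ei - fi, ej + fj⁆⁆ = -(ej + fj) := by
  have hfiej : ⁅fi, ej⁆ = 0 := by rw [← lie_skew, hejfi, neg_zero]
  have hfiei : ⁅fi, ei⁆ = -hi := by rw [← lie_skew, heifi]
  have hXej : ⁅ei - fi, ⁅ei - fi, ej⁆⁆ = -ej :=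
    lie_sub_lie_sub_eq_neg hfiej hserre_e
      (lie_lie_eq_self_of_lie_eq hfiei hfiej (by rw [neg_lie, hhiej, neg_neg]))
  have hXfj : ⁅ei - fi, ⁅ei - fi, fj⁆⁆ = -fj :=
    lie_sub_lie_sub_eq_neg_of_lie_left_eq_zero heifj hserre_f
      (lie_lie_eq_self_of_lie_eq heifi heifj hhifj)
  constructor
  · rw [lie_sub, lie_sub, hXej, hXfj, neg_sub, neg_sub_neg]
  · rw [lie_add, lie_add, hXej, hXfj, neg_add]

/-- Berman relations `[X_i,[X_i,X_j]] = -X_j` and `[X_i,[X_i,Y_j]] = -Y_j` derived from the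
Chevalley–Serre relations for two adjacent nodes (`a_{ij} = a_{ji} = -1`) of a simply-laced
diagram. -/
theorem berman_relations_white_node
    (K : Type*) [Field K]
    (g : Type*) [LieRing g] [LieAlgebra K g]
    (ei fi hi ej fj : g)
    (hhiej : ⁅hi, ej⁆ = -ej)
    (hhifj : ⁅hi, fj⁆ = fj)
    (heifj : ⁅ei, fj⁆ = 0)
    (hejfi : ⁅ej, fi⁆ = 0)
    (heifi : ⁅ei, fi⁆ = hi)
    (hhiei : ⁅hi, ei⁆ = (2 : K) • ei)
    (hhifi : ⁅hi, fi⁆ = -((2 : K) • fi))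
    (hserre_e : ⁅ei, ⁅ei, ej⁆⁆ = 0)
    (hserre_f : ⁅fi, ⁅fi, fj⁆⁆ = 0) :
    ⁅ei - fi, ⁅ei - fi, ej - fj⁆⁆ = -(ej - fj) ∧
    ⁅ei - fi, ⁅ei - fi, ej + fj⁆⁆ = -(ej + fj) :=
  berman_relations_white_node_general g ei fi hi ej fj hhiej hhifj heifj hejfi heifi hserre_e
    hserre_f
end

section
/- Let g be a Lie algebra with elements satisfying the Chevalley--Serre relations for two adjacent nodes of a simply-laced diagram (a_{ij} = -1) as above. Set Y_i = e_i + f_i, X_j = e_j - f_j, Y_j = e_j + f_j. Then [Y_i,[Y_i,X_j]] = X_j and [Y_i,[Y_i,Y_j]] = Y_j. -/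
/-! `ad(e_i + f_i)²` fixes `e_j` and `f_j` separately. Expanding `ad(e_i + f_i)² e_j`, the Serre
relation kills `[e_i,[e_i,e_j]]`, `[f_i,e_j] = 0` kills two more terms, and the Jacobi identity gives
`[f_i,[e_i,e_j]] = -[h_i,e_j] = e_j`. The case of `f_j` is the same computation for the triple
`(f_i, e_i, -h_i)`. -/

theorem lie_add_lie_add_eq_self {L : Type*} [LieRing L] {e f h x : L} (hef : ⁅e, f⁆ = h)
    (hhx : ⁅h, x⁆ = -x) (hfx : ⁅f, x⁆ = 0) (hserre : ⁅e, ⁅e, x⁆⁆ = 0) :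
    ⁅e + f, ⁅e + f, x⁆⁆ = x := by
  have hfex : ⁅f, ⁅e, x⁆⁆ = x := by
    rw [leibniz_lie, ← lie_skew f e, hef, neg_lie, hhx, neg_neg, hfx, lie_zero, add_zero]
  rw [add_lie e f x, hfx, add_zero, add_lie, hserre, hfex, zero_add]

theorem berman_relations_black_node_general
    (g : Type*) [LieRing g]
    (ei fi hi ej fj : g)
    (hhiej : ⁅hi, ej⁆ = -ej)
    (hhifj : ⁅hi, fj⁆ = fj)
    (heifj : ⁅ei, fj⁆ = 0)
    (hejfi : ⁅ej, fi⁆ = 0)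
    (heifi : ⁅ei, fi⁆ = hi)
    (hserre_e : ⁅ei, ⁅ei, ej⁆⁆ = 0)
    (hserre_f : ⁅fi, ⁅fi, fj⁆⁆ = 0) :
    ⁅ei + fi, ⁅ei + fi, ej - fj⁆⁆ = ej - fj ∧
    ⁅ei + fi, ⁅ei + fi, ej + fj⁆⁆ = ej + fj := by
  have hej : ⁅ei + fi, ⁅ei + fi, ej⁆⁆ = ej :=
    lie_add_lie_add_eq_self heifi hhiej (by rw [← lie_skew, hejfi, neg_zero]) hserre_e
  have hfj : ⁅ei + fi, ⁅ei + fi, fj⁆⁆ = fj := by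
    rw [add_comm]
    exact lie_add_lie_add_eq_self (by rw [← lie_skew, heifi]) (by rw [neg_lie, hhifj]) heifj
      hserre_f
  exact ⟨by rw [lie_sub, lie_sub, hej, hfj], by rw [lie_add, lie_add, hej, hfj]⟩

/-- Berman relations `[Y_i,[Y_i,X_j]] = X_j` and `[Y_i,[Y_i,Y_j]] = Y_j` derived from the
Chevalley–Serre relations for two adjacent nodes (`a_{ij} = a_{ji} = -1`) of a simply-laced
diagram. -/
theorem berman_relations_black_node
    (K : Type*) [Field K]
    (g : Type*) [LieRing g] [LieAlgebra K g]
    (ei fi hi ej fj : g)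
    (hhiej : ⁅hi, ej⁆ = -ej)
    (hhifj : ⁅hi, fj⁆ = fj)
    (heifj : ⁅ei, fj⁆ = 0)
    (hejfi : ⁅ej, fi⁆ = 0)
    (heifi : ⁅ei, fi⁆ = hi)
    (hhiei : ⁅hi, ei⁆ = (2 : K) • ei)
    (hhifi : ⁅hi, fi⁆ = -((2 : K) • fi))
    (hserre_e : ⁅ei, ⁅ei, ej⁆⁆ = 0)
    (hserre_f : ⁅fi, ⁅fi, fj⁆⁆ = 0) :
    ⁅ei + fi, ⁅ei + fi, ej - fj⁆⁆ = ej - fj ∧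
    ⁅ei + fi, ⁅ei + fi, ej + fj⁆⁆ = ej + fj :=
  berman_relations_black_node_general g ei fi hi ej fj hhiej hhifj heifj hejfi heifi hserre_e
    hserre_f
end

section
/- Let f be the free Lie algebra over C on generators y_1, ..., y_n. Define a map from the free Lie algebra on 2n generators x_1,...,x_{2n} by x_j -> y_j and x_{n+j} -> i·y_j for j = 1,...,n. Then each element sum_{k=1}^{2n} [x_k,[x_k,x_j]] is mapped to zero, i.e. the images satisfy sum_{k=1}^{2n} [z_k,[z_k,z_j]] = 0 for all j, where z_j = y_j and z_{n+j} = i·y_j. Consequently there is a surjective Lie algebra homomorphism Q_{2n,0}(0,...,0) -> f. -/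
open FreeLieAlgebra

/-- The defining relation elements of `Q_{2n,0}(0,…,0)` inside the free Lie algebra
on `2n` generators. -/
noncomputable def yangMillsRelations (n : ℕ) : Set (FreeLieAlgebra ℂ (Fin (2 * n))) :=
  { y | ∃ j : Fin (2 * n),
      y = ∑ k : Fin (2 * n),
            ⁅FreeLieAlgebra.of ℂ k, ⁅FreeLieAlgebra.of ℂ k, FreeLieAlgebra.of ℂ j⁆⁆ }

/-- The ideal generated by the relations of `Q_{2n,0}(0,…,0)`. -/
noncomputable def yangMillsIdeal (n : ℕ) : LieIdeal ℂ (FreeLieAlgebra ℂ (Fin (2 * n))) :=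
  LieSubmodule.lieSpan ℂ (FreeLieAlgebra ℂ (Fin (2 * n))) (yangMillsRelations n)

/-- The quantum minimal surface algebra `Q_{2n,0}(0,…,0)` over `ℂ`. -/
noncomputable abbrev YangMillsAlgebra (n : ℕ) :=
  FreeLieAlgebra ℂ (Fin (2 * n)) ⧸ yangMillsIdeal n

/-- The images `z_j = y_j`, `z_{n+j} = i·y_j` in the free Lie algebra on `n` generators. -/
noncomputable def herscovichGen (n : ℕ) (k : Fin (2 * n)) : FreeLieAlgebra ℂ (Fin n) :=
  if h : (k : ℕ) < n then FreeLieAlgebra.of ℂ ⟨k, h⟩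
  else Complex.I • FreeLieAlgebra.of ℂ ⟨(k : ℕ) - n, by omega⟩

/- The substitution `x_j ↦ y_j`, `x_{n+j} ↦ i·y_j` kills every relation because
`⁅i•y, ⁅i•y, w⁆⁆ = i² • ⁅y, ⁅y, w⁆⁆ = -⁅y, ⁅y, w⁆⁆`, so the terms for `k = j` and `k = n + j`
cancel in pairs. The induced map on `Q_{2n,0}(0,…,0)` hits every generator `y_j`, and a Lie
algebra map hitting all free generators is onto, since they can be lifted back freely. -/

namespace LieIdeal

variable {R L L' : Type*} [CommRing R] [LieRing L] [LieAlgebra R L] [LieRing L'] [LieAlgebra R L']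

def liftQ (I : LieIdeal R L) (f : L →ₗ⁅R⁆ L') (h : I ≤ f.ker) : L ⧸ I →ₗ⁅R⁆ L' :=
  { I.toSubmodule.liftQ f.toLinearMap fun x hx => LieHom.mem_ker.mp (h hx) with
    map_lie' := by
      rintro ⟨x⟩ ⟨y⟩
      exact f.map_lie x y }

@[simp]
theorem liftQ_mk (I : LieIdeal R L) (f : L →ₗ⁅R⁆ L') (h : I ≤ f.ker) (x : L) :
    I.liftQ f h (LieSubmodule.Quotient.mk x) = f x :=
  rfl

end LieIdeal

section

variable {R L : Type*} [CommRing R] [LieRing L] [LieAlgebra R L]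

theorem smul_lie_smul_lie (c : R) (a w : L) : ⁅c • a, ⁅c • a, w⁆⁆ = (c * c) • ⁅a, ⁅a, w⁆⁆ := by
  simp only [smul_lie, lie_smul, smul_smul]

theorem sum_lie_lie_append_smul_eq_zero {c : R} (hc : c * c = -1) {n : ℕ} (y : Fin n → L)
    (w : L) : ∑ k : Fin (n + n), ⁅Fin.append y (c • y) k, ⁅Fin.append y (c • y) k, w⁆⁆ = 0 := by
  rw [Fin.sum_univ_add, ← Finset.sum_add_distrib]
  refine Finset.sum_eq_zero fun i _ => ?_
  rw [Fin.append_left, Fin.append_right, Pi.smul_apply, smul_lie_smul_lie, hc, neg_one_smul,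
    add_neg_cancel]

theorem FreeLieAlgebra.surjective_of_forall_of_mem_range {X : Type*}
    (f : L →ₗ⁅R⁆ FreeLieAlgebra R X) (h : ∀ x, ∃ a, f a = of R x) : Function.Surjective f := by
  choose s hs using h
  have hsection : f.comp (lift R s) = LieHom.id := hom_ext fun x => by simp [hs]
  exact fun y => ⟨lift R s y, LieHom.congr_fun hsection y⟩

end

theorem herscovichGen_eq_append (n : ℕ) :
    herscovichGen n = Fin.append (of ℂ) (Complex.I • of ℂ) ∘ finCongr (two_mul n) := by
  rw [← Equiv.comp_symm_eq]
  ext1 k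
  refine Fin.addCases (fun i => ?_) (fun i => ?_) k <;> simp [herscovichGen, -Fin.natAdd_eq_addNat]

theorem herscovichGen_castAdd (n : ℕ) (i : Fin n) :
    herscovichGen n (Fin.cast (two_mul n).symm (Fin.castAdd n i)) = of ℂ i := by
  simp [herscovichGen_eq_append]

theorem sum_lie_lie_herscovichGen_eq_zero (n : ℕ) (w : FreeLieAlgebra ℂ (Fin n)) :
    ∑ k : Fin (2 * n), ⁅herscovichGen n k, ⁅herscovichGen n k, w⁆⁆ = 0 := by
  rw [herscovichGen_eq_append]
  exact (Equiv.sum_comp (finCongr (two_mul n)) _).trans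
    (sum_lie_lie_append_smul_eq_zero Complex.I_mul_I _ w)

theorem yangMillsIdeal_le_ker_lift (n : ℕ) :
    yangMillsIdeal n ≤ (FreeLieAlgebra.lift ℂ (herscovichGen n)).ker := by
  rw [yangMillsIdeal, LieSubmodule.lieSpan_le]
  rintro _ ⟨j, rfl⟩
  simp [sum_lie_lie_herscovichGen_eq_zero]

/-- Herscovich's epimorphism: `Q_{2n,0}(0,…,0) ↠ f_n(ℂ)`, the free Lie algebra on
`n` generators, via `x_j ↦ y_j`, `x_{n+j} ↦ i·y_j`. -/
theorem qmsa_onto_free_lie_algebra (n : ℕ) :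
    (∀ j : Fin (2 * n),
      ∑ k : Fin (2 * n), ⁅herscovichGen n k, ⁅herscovichGen n k, herscovichGen n j⁆⁆ = 0) ∧
    ∃ φ : YangMillsAlgebra n →ₗ⁅ℂ⁆ FreeLieAlgebra ℂ (Fin n),
      Function.Surjective φ ∧
      ∀ k : Fin (2 * n),
        φ (LieSubmodule.Quotient.mk (N := yangMillsIdeal n) (FreeLieAlgebra.of ℂ k)) =
          herscovichGen n k := by
  set φ := (yangMillsIdeal n).liftQ _ (yangMillsIdeal_le_ker_lift n)
  have hφ (k : Fin (2 * n)) :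
      φ (LieSubmodule.Quotient.mk (FreeLieAlgebra.of ℂ k)) = herscovichGen n k := by
    simp [φ]
  refine ⟨fun j => sum_lie_lie_herscovichGen_eq_zero n _, φ, ?_, hφ⟩
  exact FreeLieAlgebra.surjective_of_forall_of_mem_range φ fun i =>
    ⟨_, (hφ _).trans (herscovichGen_castAdd n i)⟩
end
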